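/- arXiv:1903.10976 — 5 statements merged into one kernel-verified Lean document; each statement's English description precedes it below -/
import Mathlib

section
/- Let $M$ be an absorbing Markov chain with states $S_0, S_1, \ldots, S_m$ where $S_m$ is absorbing, transitions only between adjacent states and to $S_m$ (i.e., from $S_i$ with $0<i<m-1$ one can go to $S_{i-1}$, $S_{i+1}$, $S_m$ or stay; from $S_0$ to $S_1$, $S_m$ or stay; from $S_{m-1}$ to $S_{m-2}$, $S_m$ or stay), all these transition probabilities positive, and suppose the absorption probabilities satisfy $p_{i,m} \leq p_{i+1,m}$ for all $0 \le i \le m-2$. Let $E[T_i]$ denote the expected absorption time starting from $S_i$. Then $E[T_{i-1}] \geq E[T_i]$ for all $1 \leq i \leq m$. -/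
/-!
Write `c i = p i m` for the absorption probabilities. An upward induction shows that an ascent
`E (j - 1) < E j` forces `1 ≤ c j * E j`: otherwise `c (j - 1) * E (j - 1) < 1` as well, because
`c` is nondecreasing, and the balance equation at `j - 1`, whose upward term is negative, produces
an ascent at `j - 1`; at state `0` there is no downward term and the equation fails outright.
On the other hand, if `E (i + 1) ≤ E i`, an ascent at `i` would leave `c i * E i < 1` in the
balance equation at `i`. Starting from the top transient state, which has no upward term, this
shows downward that `E` is nonincreasing; the top equation then also makes `E (m - 1)` positive.
-/

theorem mul_lt_one_of_le_of_mul_lt_one {c c' x y : ℝ} (hc : 0 ≤ c) (hcc' : c ≤ c') (hxy : x ≤ y)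
    (hy : c' * y < 1) : c * x < 1 := by
  rcases le_or_gt x 0 with hx | hx
  · exact (mul_nonpos_of_nonneg_of_nonpos hc hx).trans_lt one_pos
  · calc c * x ≤ c' * x := mul_le_mul_of_nonneg_right hcc' hx.le
      _ ≤ c' * y := mul_le_mul_of_nonneg_left hxy (hc.trans hcc')
      _ < 1 := hy

theorem absorption_time_le_pred_of_mul_lt_one (m : ℕ) (p : ℕ → ℕ → ℝ) (E : ℕ → ℝ)
    (hpos_up : ∀ i, i < m - 1 → 0 < p i (i + 1))
    (hpos_down : ∀ i, 0 < i → i < m → 0 < p i (i - 1))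
    (hpos_abs : ∀ i, i < m → 0 < p i m)
    (hmono : ∀ i, i ≤ m - 2 → p i m ≤ p (i + 1) m)
    (h0 : 1 = p 0 1 * (E 0 - E 1) + p 0 m * E 0)
    (hmid : ∀ i, 0 < i → i < m - 1 →
      1 = p i (i + 1) * (E i - E (i + 1)) + p i (i - 1) * (E i - E (i - 1)) + p i m * E i) :
    ∀ j, 0 < j → j < m → p j m * E j < 1 → E j ≤ E (j - 1) := by
  intro j
  induction j with
  | zero => intro h; omega
  | succ n ih =>
    intro _ hnm hc
    by_contra! hlt
    change E n < E (n + 1) at hlt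
    have hcn : p n m * E n < 1 :=
      mul_lt_one_of_le_of_mul_lt_one (hpos_abs n (by omega)).le (hmono n (by omega)) hlt.le hc
    have hup : p n (n + 1) * (E n - E (n + 1)) < 0 :=
      mul_neg_of_pos_of_neg (hpos_up n (by omega)) (sub_neg.2 hlt)
    rcases Nat.eq_zero_or_pos n with rfl | hn
    · linarith
    · have hdown : p n (n - 1) * (E n - E (n - 1)) ≤ 0 :=
        mul_nonpos_of_nonneg_of_nonpos (hpos_down n hn (by omega)).le
          (sub_nonpos.2 (ih hn (by omega) hcn))
      linarith [hmid n hn (by omega)]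

/-- Monotonicity of expected absorption times of the birth-death-with-absorption
Markov chain: `E (i-1) ≥ E i` for `1 ≤ i ≤ m`. -/
theorem absorption_time_monotone
    (m : ℕ) (hm : 2 ≤ m) (p : ℕ → ℕ → ℝ) (E : ℕ → ℝ)
    (hEm : E m = 0)
    (hpos_up : ∀ i, i < m - 1 → 0 < p i (i + 1))
    (hpos_down : ∀ i, 0 < i → i < m → 0 < p i (i - 1))
    (hpos_abs : ∀ i, i < m → 0 < p i m)
    (hmono : ∀ i, i ≤ m - 2 → p i m ≤ p (i + 1) m)
    (h0 : 1 = p 0 1 * (E 0 - E 1) + p 0 m * E 0)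
    (hmid : ∀ i, 0 < i → i < m - 1 →
      1 = p i (i + 1) * (E i - E (i + 1)) + p i (i - 1) * (E i - E (i - 1))
        + p i m * E i)
    (htop : 1 = p (m - 1) (m - 2) * (E (m - 1) - E (m - 2))
        + p (m - 1) m * E (m - 1)) :
    ∀ i, 1 ≤ i → i ≤ m → E i ≤ E (i - 1) := by
  have step := absorption_time_le_pred_of_mul_lt_one m p E hpos_up hpos_down hpos_abs hmono h0 hmid
  have hpred : m - 1 - 1 = m - 2 := by omega
  have hdown_top : 0 < p (m - 1) (m - 2) := hpred ▸ hpos_down (m - 1) (by omega) (by omega)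
  have hE_top : E (m - 1) ≤ E (m - 2) := by
    by_contra! hlt
    have hc : p (m - 1) m * E (m - 1) < 1 := by linarith [mul_pos hdown_top (sub_pos.2 hlt)]
    exact (hpred ▸ step (m - 1) (by omega) (by omega) hc).not_gt hlt
  have hE_top_nonneg : 0 ≤ E (m - 1) := by
    have hc : 1 ≤ p (m - 1) m * E (m - 1) := by
      linarith [mul_nonpos_of_nonneg_of_nonpos hdown_top.le (sub_nonpos.2 hE_top)]
    exact (pos_of_mul_pos_right (one_pos.trans_le hc) (hpos_abs (m - 1) (by omega)).le).le
  intro i hi him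
  induction him using Nat.decreasingInduction with
  | self => rwa [hEm]
  | of_succ k hk ih =>
    have hsucc : E (k + 1) ≤ E k := ih (by omega)
    rcases (Nat.le_sub_one_of_lt hk).eq_or_lt with rfl | hk
    · rwa [hpred]
    by_contra! hlt
    have hc : p k m * E k < 1 := by
      linarith [hmid k hi hk, mul_nonneg (hpos_up k hk).le (sub_nonneg.2 hsucc),
        mul_pos (hpos_down k hi (by omega)) (sub_pos.2 hlt)]
    exact (step k hi (by omega) hc).not_gt hlt
end

section
/- Let $A = [a_{ik}]$ be an $n \times n$ strictly diagonally dominant matrix, i.e., $|a_{ii}| > \sum_{k \neq i} |a_{ik}|$ for all $i$. Then $A$ is invertible, and writing $A^{-1} = [n_{ik}]$, for each $k$ we have $|n_{kk}| \leq \left(|a_{kk}| - \sum_{l \neq k} |a_{kl}|\right)^{-1}$. -/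
/-!
Let `x` be the `k`-th column of `A⁻¹`, so that `A x = e_k`, and let `i` be an index where `|x i|`
is largest. Row `i` of `A x` has absolute value at least `(|a_ii| - ∑_{j ≠ i} |a_ij|) |x_i|`.
If `i ≠ k` this forces `x = 0`, which is absurd; so `i = k`, and row `k` gives the bound.
-/

open Finset Matrix

variable {ι K : Type*} [Fintype ι] [DecidableEq ι]
  [Field K] [LinearOrder K] [IsStrictOrderedRing K]

namespace Matrix

theorem sub_sum_erase_abs_mul_le_abs_mulVec_apply (A : Matrix ι ι K) {x : ι → K} {i : ι}
    (hi : ∀ j, |x j| ≤ |x i|) :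
    (|A i i| - ∑ j ∈ univ.erase i, |A i j|) * |x i| ≤ |(A *ᵥ x) i| := by
  have hsplit : (A *ᵥ x) i = A i i * x i + ∑ j ∈ univ.erase i, A i j * x j := by
    rw [mulVec, dotProduct, ← add_sum_erase _ _ (mem_univ i)]
  have hoff : |∑ j ∈ univ.erase i, A i j * x j| ≤ (∑ j ∈ univ.erase i, |A i j|) * |x i| := by
    rw [sum_mul]
    refine (abs_sum_le_sum_abs _ _).trans (sum_le_sum fun j _ => ?_)
    rw [abs_mul]
    exact mul_le_mul_of_nonneg_left (hi j) (abs_nonneg _)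
  calc (|A i i| - ∑ j ∈ univ.erase i, |A i j|) * |x i|
      = |A i i * x i| - (∑ j ∈ univ.erase i, |A i j|) * |x i| := by rw [abs_mul]; ring
    _ ≤ |A i i * x i| - |∑ j ∈ univ.erase i, A i j * x j| := by gcongr
    _ ≤ |(A *ᵥ x) i| := by rw [hsplit]; exact abs_sub_abs_le_abs_add _ _

theorem abs_le_abs_of_mulVec_eq_single (A : Matrix ι ι K)
    (hsdd : ∀ i, ∑ j ∈ univ.erase i, |A i j| < |A i i|) {x : ι → K} {k : ι}
    (hx : A *ᵥ x = Pi.single k 1) (j : ι) : |x j| ≤ |x k| := by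
  obtain ⟨i, -, hi⟩ := exists_max_image univ (fun j => |x j|) ⟨k, mem_univ k⟩
  replace hi : ∀ j, |x j| ≤ |x i| := fun j => hi j (mem_univ j)
  obtain rfl | hik := eq_or_ne i k
  · exact hi j
  have hxi : |x i| ≤ 0 := by
    have := sub_sum_erase_abs_mul_le_abs_mulVec_apply A hi
    rw [hx, Pi.single_eq_of_ne hik, abs_zero] at this
    exact nonpos_of_mul_nonpos_right this (sub_pos.2 (hsdd i))
  have hx0 : x = 0 := funext fun j => abs_nonpos_iff.1 ((hi j).trans hxi)
  have := congrFun hx k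
  simp [hx0] at this

theorem abs_mul_sub_sum_erase_le_one_of_mulVec_eq_single (A : Matrix ι ι K)
    (hsdd : ∀ i, ∑ j ∈ univ.erase i, |A i j| < |A i i|) {x : ι → K} {k : ι}
    (hx : A *ᵥ x = Pi.single k 1) :
    (|A k k| - ∑ l ∈ univ.erase k, |A k l|) * |x k| ≤ 1 := by
  simpa [hx] using
    sub_sum_erase_abs_mul_le_abs_mulVec_apply A (abs_le_abs_of_mulVec_eq_single A hsdd hx)

end Matrix

/-- A strictly (row) diagonally dominant real matrix is invertible, and the
diagonal entries of its inverse satisfy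
`|n_kk| ≤ (|a_kk| - ∑_{l ≠ k} |a_kl|)⁻¹`. -/
theorem sdd_inverse_diagonal_bound
    (n : ℕ) (A : Matrix (Fin n) (Fin n) ℝ)
    (hsdd : ∀ i, ∑ k ∈ Finset.univ.erase i, |A i k| < |A i i|) :
    IsUnit A.det ∧
      ∀ k, |A⁻¹ k k| ≤ (|A k k| - ∑ l ∈ Finset.univ.erase k, |A k l|)⁻¹ := by
  have hunit : IsUnit A.det :=
    isUnit_iff_ne_zero.2 (det_ne_zero_of_sum_row_lt_diag (by simpa only [Real.norm_eq_abs]))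
  refine ⟨hunit, fun k => ?_⟩
  have hcol : A *ᵥ (A⁻¹ *ᵥ Pi.single k 1) = Pi.single k 1 := by
    rw [mulVec_mulVec, mul_nonsing_inv A hunit, one_mulVec]
  have hbound := abs_mul_sub_sum_erase_le_one_of_mulVec_eq_single A hsdd hcol
  rw [mulVec_single_one, col_apply] at hbound
  rw [← mul_one (_ - _)⁻¹]
  exact (le_inv_mul_iff₀ (sub_pos.2 (hsdd k))).2 hbound
end

section
/- Let $x, y \in \{0,1\}^n$ have equal numbers of ones and Hamming distance $2d$ with $d \geq 1$. If $z$ is produced by uniform crossover (each bit of $z$ equals the corresponding bit of $x$ or of $y$, chosen independently and uniformly at random), then the probability that $z$ has strictly more ones than $x$ is at least $\frac{1 - \binom{2d}{d}2^{-2d}}{2} \geq 1/4$. -/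
/-!
Complementing the crossover mask swaps the roles of the two parents, so the offspring of a mask
and of its complement together carry `countOnes x + countOnes y = 2 * countOnes x` ones. Hence
improving and worsening masks are equinumerous, and the improving ones make up half of the masks
that do not tie with `x`. A tie means exactly `d` ones on the `2d` positions where the parents
differ; there the mask is determined by the offspring, and it is free elsewhere, so at most
`C(2d, d) * 2 ^ (n - 2d)` masks tie. Finally `2 * C(2d, d) ≤ 4 ^ d` because
`C(2d, d) = 2 * C(2d - 1, d - 1)` and `C(2d - 1, d - 1) ≤ 4 ^ (d - 1)`.
-/

open scoped BigOperators

/-- Number of one-bits of a bitstring. -/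
def countOnes {n : ℕ} (x : Fin n → Bool) : ℕ :=
  (Finset.univ.filter fun i => x i = true).card

open Finset

theorem Nat.centralBinom_succ_eq_two_mul_choose (m : ℕ) :
    Nat.centralBinom (m + 1) = 2 * (2 * m + 1).choose m := by
  rw [Nat.centralBinom_eq_two_mul_choose, show 2 * (m + 1) = 2 * m + 1 + 1 by ring,
    Nat.choose_succ_succ', Nat.choose_symm_half, ← two_mul]

theorem Nat.two_mul_centralBinom_le_four_pow {n : ℕ} (hn : 0 < n) :
    2 * n.centralBinom ≤ 4 ^ n := by
  obtain ⟨m, rfl⟩ := Nat.exists_eq_add_one_of_ne_zero hn.ne'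
  rw [Nat.centralBinom_succ_eq_two_mul_choose, pow_succ]
  have := Nat.choose_middle_le_pow m
  omega

theorem two_mul_card_filter_lt_add_card_filter_eq {β : Type*} [Fintype β] {F : β → β}
    (hF : Function.Involutive F) (f : β → ℕ) (c : ℕ) (hf : ∀ b, f b + f (F b) = 2 * c) :
    2 * #{b | c < f b} + #{b | f b = c} = Fintype.card β := by
  have hswap : #{b | c < f b} = #{b | f b < c} := card_equiv hF.toPerm fun b => by
    simp only [mem_filter, mem_univ, true_and, Function.Involutive.coe_toPerm]
    have := hf b
    omega
  rw [two_mul]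
  nth_rw 2 [hswap]
  rw [← card_univ, card_eq_sum_ones univ]
  simp only [card_filter, ← sum_add_distrib]
  refine sum_congr rfl fun b _ => ?_
  split_ifs <;> omega

def crossover {ι : Type*} (x y s : ι → Bool) : ι → Bool := fun i => if s i then x i else y i

section crossover

variable {ι : Type*} {x y : ι → Bool}

theorem crossover_apply_eq_of_eq {i : ι} (h : x i = y i) (s : ι → Bool) :
    crossover x y s i = x i := by
  cases hs : s i <;> simp [crossover, hs, h]

theorem eq_of_crossover_apply_eq {i : ι} (h : x i ≠ y i) {s t : ι → Bool}
    (hst : crossover x y s i = crossover x y t i) : s i = t i := by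
  revert hst
  unfold crossover
  cases s i <;> cases t i <;> simp [h, Ne.symm h]

variable [Fintype ι] [DecidableEq ι]

theorem card_filter_crossover_eq_le (D : Finset ι) (hD : ∀ i ∈ D, x i ≠ y i) (k : ℕ) :
    #{s : ι → Bool | #{i ∈ D | crossover x y s i} = k}
      ≤ (#D).choose k * 2 ^ (Fintype.card ι - #D) := by
  calc _ ≤ #(D.powersetCard k ×ˢ Dᶜ.powerset) := by
        refine card_le_card_of_injOn (fun s => ({i ∈ D | crossover x y s i}, {i ∈ Dᶜ | s i}))
          (fun s hs => ?_) fun s _ t _ hst => ?_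
        · rw [mem_coe, mem_filter] at hs
          exact mem_product.mpr ⟨mem_powersetCard.mpr ⟨filter_subset _ _, hs.2⟩,
            mem_powerset.mpr (filter_subset _ _)⟩
        · simp only [Prod.mk.injEq, Finset.ext_iff, mem_filter, mem_compl] at hst
          funext i
          by_cases hi : i ∈ D
          · exact eq_of_crossover_apply_eq (hD i hi)
              (Bool.eq_iff_iff.mpr (by simpa [hi] using hst.1 i))
          · exact Bool.eq_iff_iff.mpr (by simpa [hi] using hst.2 i)
    _ = (#D).choose k * 2 ^ (Fintype.card ι - #D) := by
        rw [card_product, card_powersetCard, card_powerset, card_compl]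

end crossover

section countOnes

variable {n : ℕ}

theorem countOnes_crossover_add_countOnes_crossover_not (x y s : Fin n → Bool) :
    countOnes (crossover x y s) + countOnes (crossover x y fun i => !s i)
      = countOnes x + countOnes y := by
  simp only [countOnes, card_filter, ← sum_add_distrib]
  refine sum_congr rfl fun i _ => ?_
  cases hs : s i <;> simp [crossover, hs, add_comm]

theorem countOnes_eq_card_filter_add_card_filter_compl (D : Finset (Fin n)) (w : Fin n → Bool) :
    countOnes w = #{i ∈ D | w i} + #{i ∈ Dᶜ | w i} := by
  rw [countOnes, ← card_union_of_disjoint (disjoint_filter_filter disjoint_compl_right),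
    ← filter_union, union_compl]

theorem countOnes_crossover_eq_iff {x y : Fin n → Bool} {D : Finset (Fin n)}
    (hD : ∀ i ∉ D, x i = y i) (s : Fin n → Bool) :
    countOnes (crossover x y s) = countOnes x ↔
      #{i ∈ D | crossover x y s i} = #{i ∈ D | x i} := by
  have hout : {i ∈ Dᶜ | crossover x y s i} = {i ∈ Dᶜ | x i} :=
    filter_congr fun i hi => by rw [crossover_apply_eq_of_eq (hD i (mem_compl.mp hi))]
  rw [countOnes_eq_card_filter_add_card_filter_compl D,
    countOnes_eq_card_filter_add_card_filter_compl D x, hout]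
  omega

theorem two_mul_card_filter_eq_card_of_countOnes_eq {x y : Fin n → Bool} {D : Finset (Fin n)}
    (hD : ∀ i, i ∈ D ↔ x i ≠ y i) (hones : countOnes x = countOnes y) :
    2 * #{i ∈ D | x i} = #D := by
  have hy : #{i ∈ D | y i} = #{i ∈ D | x i} :=
    (countOnes_crossover_eq_iff (fun i hi => not_not.mp (mt (hD i).mpr hi)) fun _ => false).mp
      hones.symm
  have hnot : {i ∈ D | ¬ x i} = {i ∈ D | y i} := filter_congr fun i hi => by
    have := (hD i).mp hi
    cases hx : x i <;> cases hy : y i <;> simp_all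
  rw [← card_filter_add_card_filter_not (s := D) (fun i => x i = true), hnot, hy, two_mul]

theorem card_filter_countOnes_crossover_eq_le {d : ℕ} {x y : Fin n → Bool}
    (hones : countOnes x = countOnes y) (hdist : #{i | x i ≠ y i} = 2 * d) :
    #{s | countOnes (crossover x y s) = countOnes x} ≤ (2 * d).choose d * 2 ^ (n - 2 * d) := by
  set D : Finset (Fin n) := {i | x i ≠ y i}
  have hD : ∀ i, i ∈ D ↔ x i ≠ y i := by simp [D]
  have hxD : #{i ∈ D | x i} = d := by
    have := two_mul_card_filter_eq_card_of_countOnes_eq hD hones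
    omega
  calc _ ≤ #{s : Fin n → Bool | #{i ∈ D | crossover x y s i} = d} := by
        refine card_le_card (monotone_filter_right _ fun s _ hs => ?_)
        rwa [← hxD, ← countOnes_crossover_eq_iff (fun i hi => not_not.mp (mt (hD i).mpr hi))]
    _ ≤ _ := by simpa [hdist] using card_filter_crossover_eq_le D (fun i => (hD i).mp) d

theorem two_mul_card_filter_countOnes_lt_add_card_filter_eq {x y : Fin n → Bool}
    (hones : countOnes x = countOnes y) :
    2 * #{s | countOnes x < countOnes (crossover x y s)}
      + #{s | countOnes (crossover x y s) = countOnes x} = 2 ^ n := by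
  simpa using two_mul_card_filter_lt_add_card_filter_eq (F := fun s i => !s i)
    (fun s => by simp) (fun s => countOnes (crossover x y s)) (countOnes x)
    (fun s => by rw [countOnes_crossover_add_countOnes_crossover_not, hones, two_mul])

end countOnes

theorem Nat.choose_two_mul_div_two_pow_le_half {d : ℕ} (hd : 0 < d) :
    ((2 * d).choose d : ℝ) / 2 ^ (2 * d) ≤ 1 / 2 := by
  have h := Nat.two_mul_centralBinom_le_four_pow hd
  rw [Nat.centralBinom_eq_two_mul_choose, show 4 ^ d = 2 ^ (2 * d) by rw [pow_mul]; norm_num] at h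
  have hR : 2 * ((2 * d).choose d : ℝ) ≤ 2 ^ (2 * d) := by exact_mod_cast h
  rw [div_le_iff₀ (by positivity)]
  linarith

theorem one_sub_div_two_pow_div_two_le_div {M E C k n : ℕ} (hk : k ≤ n) (h : 2 * M + E = 2 ^ n)
    (hE : E ≤ C * 2 ^ (n - k)) : (1 - (C : ℝ) / 2 ^ k) / 2 ≤ M / 2 ^ n := by
  obtain ⟨m, rfl⟩ := Nat.exists_eq_add_of_le hk
  rw [Nat.add_sub_cancel_left] at hE
  rw [pow_add] at h
  have hN : 2 ^ k * 2 ^ m ≤ C * 2 ^ m + 2 * M := by omega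
  have hR : (2 : ℝ) ^ k * 2 ^ m ≤ C * 2 ^ m + 2 * M := by exact_mod_cast hN
  rw [pow_add, le_div_iff₀ (by positivity)]
  field_simp
  linear_combination hR

/-- If `x, y ∈ {0,1}ⁿ` have the same number of ones and Hamming distance `2d`
(`d ≥ 1`), then the probability (fraction of the `2ⁿ` uniform crossover masks)
that the offspring has strictly more ones than `x` is at least
`(1 - C(2d,d) 2^{-2d})/2 ≥ 1/4`. -/
theorem uniform_crossover_improvement_prob
    (n d : ℕ) (hd : 1 ≤ d) (x y : Fin n → Bool)
    (hones : countOnes x = countOnes y)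
    (hdist : (Finset.univ.filter fun i => x i ≠ y i).card = 2 * d) :
    (1 - (Nat.choose (2 * d) d : ℝ) / 2 ^ (2 * d)) / 2 ≤
      ((Finset.univ.filter fun s : Fin n → Bool =>
          countOnes x < countOnes fun i => if s i then x i else y i).card : ℝ)
        / 2 ^ n ∧
    (1 : ℝ) / 4 ≤ (1 - (Nat.choose (2 * d) d : ℝ) / 2 ^ (2 * d)) / 2 := by
  have hn : 2 * d ≤ n := hdist ▸ (card_filter_le _ _).trans_eq (card_fin n)
  refine ⟨?_, by linarith [Nat.choose_two_mul_div_two_pow_le_half hd]⟩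
  exact one_sub_div_two_pow_div_two_le_div hn
    (two_mul_card_filter_countOnes_lt_add_card_filter_eq hones)
    (card_filter_countOnes_crossover_eq_le hones hdist)
end

section
/- (Additive drift theorem) Let $(X_t)_{t \geq 0}$ be a stochastic process adapted to a filtration $(\mathcal{F}_t)$, taking values in $S \subseteq \{0\} \cup [x_{\min}, x_{\max}]$ with $x_{\min} > 0$. Let $g : \{0\} \cup [x_{\min}, x_{\max}] \to \mathbb{R}_{\geq 0}$ satisfy $g(0) = 0$ and $0 < g(x) < \infty$ for $x \neq 0$. Let $T = \min\{t : X_t = 0\}$. If there exists $\alpha > 0$ such that $E[g(X_t) - g(X_{t+1}) \mid \mathcal{F}_t, X_t \geq x_{\min}] \geq \alpha$ for all $t$, then $E[T \mid X_0] \leq g(X_0)/\alpha$. -/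
/-!
Let `τ` be the first time `X` hits `0`. The compensated potential `g (X t) + α t`, stopped at `τ`,
satisfies the supermartingale inequality: before `τ` this is the drift condition, after `τ` the
process is frozen at `α τ` since `g 0 = 0`. As `g ≥ 0` on the state space, this gives
`E[α (t ∧ τ) | ℱ 0] ≤ g (X 0)` for every `t`. Integrating, `E[t ∧ τ]` is bounded, so `τ < ∞`
almost surely by Markov's inequality, and then `τ = T`; monotone convergence in `t` (for
conditional expectations) gives `E[T | ℱ 0] ≤ g (X 0) / α`.
-/

open MeasureTheory Filter Topology

namespace MeasureTheory

variable {Ω β : Type*} {m0 : MeasurableSpace Ω} {μ : Measure Ω} {ℱ : Filtration ℕ m0}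

lemma stoppedProcess_zero (W : ℕ → Ω → β) (τ : Ω → ℕ∞) : stoppedProcess W τ 0 = W 0 :=
  funext fun _ ↦ stoppedProcess_eq_of_le zero_le

lemma stoppedProcess_add_one [AddZeroClass β] (W : ℕ → Ω → β) (τ : Ω → ℕ∞) (n : ℕ) :
    stoppedProcess W τ (n + 1) =
      {ω | τ ω ≤ n}.indicator (stoppedProcess W τ n) + {ω | n < τ ω}.indicator (W (n + 1)) := by
  ext ω
  by_cases h : τ ω ≤ n
  · have h' : τ ω ≤ ((n + 1 : ℕ) : ℕ∞) := h.trans (by norm_cast; omega)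
    rw [stoppedProcess_eq_of_ge h', ← stoppedProcess_eq_of_ge (u := W) h]
    simp [h, h.not_gt]
  · have h' : ((n + 1 : ℕ) : ℕ∞) ≤ τ ω := Order.add_one_le_of_lt (not_le.mp h)
    rw [stoppedProcess_eq_of_le h']
    simp [h, not_le.mp h]

/-- `W` need not be adapted, only its value frozen at `τ` must be known at time `n`: in the drift
theorem `g ∘ X` may fail to be adapted, but the frozen value is `α τ` because `g 0 = 0`. -/
lemma condExp_stoppedProcess_add_one_le [IsFiniteMeasure μ] {W : ℕ → Ω → ℝ}
    {τ : Ω → ℕ∞} (hτ : IsStoppingTime ℱ τ) (hW : ∀ n, Integrable (W n) μ)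
    (hstopped : ∀ n : ℕ, StronglyMeasurable[ℱ n] ({ω | τ ω ≤ n}.indicator (stoppedProcess W τ n)))
    (hdrift : ∀ n : ℕ, ∀ᵐ ω ∂μ, (n : ℕ∞) < τ ω → μ[W (n + 1) | ℱ n] ω ≤ W n ω) (n : ℕ) :
    μ[stoppedProcess W τ (n + 1) | ℱ n] ≤ᵐ[μ] stoppedProcess W τ n := by
  have hgt : MeasurableSet[ℱ n] {ω | (n : ℕ∞) < τ ω} := hτ.measurableSet_gt n
  have hstopped_int : Integrable ({ω | τ ω ≤ n}.indicator (stoppedProcess W τ n)) μ :=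
    (integrable_stoppedProcess hτ hW n).indicator (ℱ.le n _ (hτ.measurableSet_le n))
  have hsplit := condExp_add (m := ℱ n) hstopped_int ((hW (n + 1)).indicator (ℱ.le n _ hgt))
  rw [condExp_of_stronglyMeasurable (ℱ.le n) (hstopped n) hstopped_int] at hsplit
  filter_upwards [hsplit, condExp_indicator (m := ℱ n) (hW (n + 1)) hgt, hdrift n]
    with ω hω hind hdriftω
  rw [stoppedProcess_add_one, hω, Pi.add_apply, hind]
  by_cases h : τ ω ≤ n
  · simp [h, h.not_gt]
  · simp [h, not_le.mp h, hdriftω (not_le.mp h), stoppedProcess_eq_of_le (not_le.mp h).le]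

lemma condExp_le_of_condExp_add_one_le [IsFiniteMeasure μ] {Z : ℕ → Ω → ℝ}
    (hZ : ∀ n, Integrable (Z n) μ) (hstep : ∀ n, μ[Z (n + 1) | ℱ n] ≤ᵐ[μ] Z n) (k n : ℕ) :
    μ[Z (k + n + 1) | ℱ k] ≤ᵐ[μ] Z k := by
  induction n with
  | zero => exact hstep k
  | succ n ih =>
    have htower : μ[μ[Z (k + n + 1 + 1) | ℱ (k + n + 1)] | ℱ k] =ᵐ[μ] μ[Z (k + n + 1 + 1) | ℱ k] :=
      condExp_condExp_of_le (ℱ.mono (by omega)) (ℱ.le _)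
    exact htower.symm.trans_le
      ((condExp_mono integrable_condExp (hZ _) (hstep _)).trans ih)

lemma integrable_of_tendsto_of_integral_norm_le {F : ℕ → Ω → ℝ} {f : Ω → ℝ} {C : ℝ}
    (hF : ∀ n, Integrable (F n) μ) (hC : ∀ n, ∫ ω, ‖F n ω‖ ∂μ ≤ C)
    (hlim : ∀ᵐ ω ∂μ, Tendsto (F · ω) atTop (𝓝 (f ω))) : Integrable f μ := by
  refine ⟨aestronglyMeasurable_of_tendsto_ae atTop (fun n ↦ (hF n).1) hlim, ?_⟩
  have hfatou := lintegral_liminf_le' (u := atTop) (fun n ↦ (hF n).1.aemeasurable.enorm)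
  have hlim_enorm : ∫⁻ ω, ‖f ω‖ₑ ∂μ = ∫⁻ ω, liminf (fun n ↦ ‖F n ω‖ₑ) atTop ∂μ :=
    lintegral_congr_ae (by filter_upwards [hlim] with ω hω using hω.enorm.liminf_eq.symm)
  have hbound : ∀ n, ∫⁻ ω, ‖F n ω‖ₑ ∂μ ≤ ENNReal.ofReal C := fun n ↦ by
    rw [← ofReal_integral_norm_eq_lintegral_enorm (hF n)]
    exact ENNReal.ofReal_le_ofReal (hC n)
  rw [HasFiniteIntegral, hlim_enorm]
  exact hfatou.trans_lt ((liminf_le_of_frequently_le' (Frequently.of_forall hbound)).trans_lt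
    ENNReal.ofReal_lt_top)

lemma ae_nonpos_of_ae_le_of_tendsto_integral {f : Ω → ℝ} (hf : AEMeasurable f μ)
    {r : ℕ → Ω → ℝ} (hr : ∀ n, Integrable (r n) μ) (hr_nonneg : ∀ n, 0 ≤ᵐ[μ] r n)
    (hr_lim : Tendsto (fun n ↦ ∫ ω, r n ω ∂μ) atTop (𝓝 0)) (hfr : ∀ n, f ≤ᵐ[μ] r n) :
    f ≤ᵐ[μ] 0 := by
  have hbound : ∀ n, ∫⁻ ω, ENNReal.ofReal (f ω) ∂μ ≤ ENNReal.ofReal (∫ ω, r n ω ∂μ) := fun n ↦ by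
    rw [ofReal_integral_eq_lintegral_ofReal (hr n) (hr_nonneg n)]
    exact lintegral_mono_ae ((hfr n).mono fun ω h ↦ ENNReal.ofReal_le_ofReal h)
  have hzero : ∫⁻ ω, ENNReal.ofReal (f ω) ∂μ = 0 := by
    refine le_antisymm (ge_of_tendsto' (x := atTop) ?_ hbound) zero_le
    have := (ENNReal.continuous_ofReal.tendsto 0).comp hr_lim
    rwa [ENNReal.ofReal_zero] at this
  filter_upwards [(lintegral_eq_zero_iff' hf.ennreal_ofReal).mp hzero] with ω hω
  simpa using hω

lemma condExp_ae_le_of_monotone_of_tendsto [IsFiniteMeasure μ] {m : MeasurableSpace Ω}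
    (hm : m ≤ m0) {F : ℕ → Ω → ℝ} {f h : Ω → ℝ} (hF : ∀ n, Integrable (F n) μ) (hf : Integrable f μ)
    (hmono : ∀ᵐ ω ∂μ, Monotone (F · ω)) (hlim : ∀ᵐ ω ∂μ, Tendsto (F · ω) atTop (𝓝 (f ω)))
    (hh : AEMeasurable h μ) (hFh : ∀ n, μ[F n | m] ≤ᵐ[μ] h) : μ[f | m] ≤ᵐ[μ] h := by
  have hFf : ∀ n, F n ≤ᵐ[μ] f := fun n ↦ by
    filter_upwards [hmono, hlim] with ω hmonoω hlimω using hmonoω.ge_of_tendsto hlimω n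
  have hgap : ∀ n, μ[f - F n | m] =ᵐ[μ] μ[f | m] - μ[F n | m] := fun n ↦ condExp_sub hf (hF n) m
  refine (ae_nonpos_of_ae_le_of_tendsto_integral
    (((stronglyMeasurable_condExp.mono hm).aemeasurable).sub hh)
    (r := fun n ↦ μ[f - F n | m]) (fun n ↦ integrable_condExp)
    (fun n ↦ condExp_nonneg ((hFf n).mono fun ω h ↦ sub_nonneg.mpr h)) ?_ ?_).mono
    fun ω h ↦ sub_nonpos.mp h
  · simp_rw [integral_condExp hm]
    have := integral_tendsto_of_tendsto_of_monotone hF hf hmono hlim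
    simpa [integral_sub hf (hF _)] using (tendsto_const_nhds (x := ∫ ω, f ω ∂μ)).sub this
  · intro n
    filter_upwards [hgap n, hFh n] with ω hgapω hFhω
    simp only [Pi.sub_apply, hgapω]
    linarith

noncomputable abbrev stoppedClock (τ : Ω → ℕ∞) : ℕ → Ω → ℝ :=
  stoppedProcess (fun (t : ℕ) _ ↦ (t : ℝ)) τ

lemma stoppedClock_nonneg (τ : Ω → ℕ∞) (n : ℕ) (ω : Ω) : 0 ≤ stoppedClock τ n ω :=
  Nat.cast_nonneg _

lemma stoppedClock_apply_of_eq (τ : Ω → ℕ∞) {ω : Ω} {k : ℕ} (h : τ ω = k) (n : ℕ) :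
    stoppedClock τ n ω = min (n : ℝ) k := by
  have hmin : min (WithTop.some n) (τ ω) = WithTop.some (min n k) := by
    rw [h]
    exact (WithTop.coe_min n k).symm
  simp only [stoppedClock, stoppedProcess, hmin]
  exact Nat.cast_min n k

lemma ae_ne_top_of_integral_stoppedClock_le [IsFiniteMeasure μ] {τ : Ω → ℕ∞} {C : ℝ}
    (hint : ∀ n, Integrable (stoppedClock τ n) μ)
    (hC : ∀ n, ∫ ω, stoppedClock τ n ω ∂μ ≤ C) :
    ∀ᵐ ω ∂μ, τ ω ≠ ⊤ := by
  have hmarkov : ∀ n : ℕ, n * μ.real {ω | τ ω = ⊤} ≤ C := fun n ↦ by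
    have hsub : {ω | τ ω = ⊤} ⊆ {ω | (n : ℝ) ≤ stoppedClock τ n ω} := fun ω h ↦
      (stoppedProcess_eq_of_le (u := fun (t : ℕ) _ ↦ (t : ℝ)) (h.symm ▸ le_top)).ge
    calc n * μ.real {ω | τ ω = ⊤}
        ≤ n * μ.real {ω | (n : ℝ) ≤ stoppedClock τ n ω} := by
          gcongr
          exact measure_ne_top _ _
      _ ≤ C := (mul_meas_ge_le_integral_of_nonneg
          (ae_of_all _ (stoppedClock_nonneg τ n)) (hint n) n).trans (hC n)
  have hzero : μ.real {ω | τ ω = ⊤} = 0 := by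
    by_contra hne
    have hpos := lt_of_le_of_ne measureReal_nonneg (Ne.symm hne)
    obtain ⟨n, hn⟩ := exists_nat_gt (C / μ.real {ω | τ ω = ⊤})
    exact (hmarkov n).not_gt ((div_lt_iff₀ hpos).mp hn)
  rw [ae_iff]
  simpa [measureReal_eq_zero_iff] using hzero

end MeasureTheory

section AdditiveDrift

variable {Ω : Type*} {m0 : MeasurableSpace Ω} {μ : Measure Ω} {ℱ : Filtration ℕ m0}
  {X : ℕ → Ω → ℝ} {g : ℝ → ℝ} {α xmin xmax : ℝ}

noncomputable def compensatedPotential (g : ℝ → ℝ) (X : ℕ → Ω → ℝ) (α : ℝ) : ℕ → Ω → ℝ :=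
  fun t ω ↦ g (X t ω) + α * t

lemma stoppedProcess_compensatedPotential (τ : Ω → ℕ∞) :
    stoppedProcess (compensatedPotential g X α) τ =
      stoppedProcess (fun t ω ↦ g (X t ω)) τ + α • stoppedClock τ :=
  rfl

/-- Unlike `T` in `additive_drift`, which is `sInf ∅ = 0` on paths that never reach `0`, this
hitting time is `⊤` there. -/
noncomputable def zeroHittingTime (X : ℕ → Ω → ℝ) : Ω → ℕ∞ := hittingAfter X {0} 0

lemma MeasureTheory.Adapted.isStoppingTime_zeroHittingTime (hX : Adapted ℱ X) :
    IsStoppingTime ℱ (zeroHittingTime X) :=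
  hX.isStoppingTime_hittingAfter (measurableSet_singleton 0)

lemma ne_zero_of_lt_zeroHittingTime {n : ℕ} {ω : Ω} (h : (n : ℕ∞) < zeroHittingTime X ω) :
    X n ω ≠ 0 :=
  notMem_of_lt_hittingAfter h (Nat.zero_le n)

lemma eq_zero_of_zeroHittingTime_ne_top {ω : Ω} (h : zeroHittingTime X ω ≠ ⊤) :
    X (zeroHittingTime X ω).untopA ω = 0 :=
  hittingAfter_mem_set_of_ne_top h

lemma zeroHittingTime_eq_top_iff {ω : Ω} : zeroHittingTime X ω = ⊤ ↔ ∀ t, X t ω ≠ 0 :=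
  hittingAfter_eq_top_iff.trans (by simp)

lemma zeroHittingTime_eq_sInf {ω : Ω} (h : ∃ t, X t ω = 0) :
    zeroHittingTime X ω = (sInf {t | X t ω = 0} : ℕ) := by
  simp [zeroHittingTime, hittingAfter, h]
  rfl

lemma stoppedProcess_potential_eq_zero_of_zeroHittingTime_le (hg0 : g 0 = 0) {n : ℕ} {ω : Ω}
    (h : zeroHittingTime X ω ≤ n) :
    stoppedProcess (fun t ω ↦ g (X t ω)) (zeroHittingTime X) n ω = 0 := by
  rw [stoppedProcess_eq_of_ge (u := fun t ω ↦ g (X t ω)) h,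
    eq_zero_of_zeroHittingTime_ne_top (ne_top_of_le_ne_top (by simp) h), hg0]

lemma ae_xmin_le_of_lt_zeroHittingTime
    (hrange : ∀ t, ∀ᵐ ω ∂μ, X t ω = 0 ∨ (xmin ≤ X t ω ∧ X t ω ≤ xmax)) (n : ℕ) :
    ∀ᵐ ω ∂μ, (n : ℕ∞) < zeroHittingTime X ω → xmin ≤ X n ω := by
  filter_upwards [hrange n] with ω hω hlt
  exact (hω.resolve_left (ne_zero_of_lt_zeroHittingTime hlt)).1

lemma ae_nonneg_potential (hrange : ∀ t, ∀ᵐ ω ∂μ, X t ω = 0 ∨ (xmin ≤ X t ω ∧ X t ω ≤ xmax))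
    (hg0 : g 0 = 0) (hgpos : ∀ x, xmin ≤ x → x ≤ xmax → 0 < g x) :
    ∀ᵐ ω ∂μ, ∀ t, 0 ≤ g (X t ω) := by
  rw [ae_all_iff]
  intro t
  filter_upwards [hrange t] with ω hω
  rcases hω with h0 | ⟨hlo, hhi⟩
  · rw [h0, hg0]
  · exact (hgpos _ hlo hhi).le

lemma condExp_stoppedProcess_compensatedPotential_add_one_le [IsFiniteMeasure μ]
    (hX : Adapted ℱ X) (hrange : ∀ t, ∀ᵐ ω ∂μ, X t ω = 0 ∨ (xmin ≤ X t ω ∧ X t ω ≤ xmax))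
    (hg0 : g 0 = 0) (hgint : ∀ t, Integrable (fun ω ↦ g (X t ω)) μ)
    (hdrift : ∀ t, ∀ᵐ ω ∂μ, xmin ≤ X t ω →
      (μ[fun ω' ↦ g (X (t + 1) ω') | ℱ t]) ω ≤ g (X t ω) - α) (n : ℕ) :
    μ[stoppedProcess (compensatedPotential g X α) (zeroHittingTime X) (n + 1) | ℱ n]
      ≤ᵐ[μ] stoppedProcess (compensatedPotential g X α) (zeroHittingTime X) n := by
  have hτ := hX.isStoppingTime_zeroHittingTime
  refine condExp_stoppedProcess_add_one_le (W := compensatedPotential g X α) hτ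
    (fun t ↦ (hgint t).add (integrable_const _)) (fun t ↦ ?_) (fun t ↦ ?_) n
  · have hstopped : {ω | zeroHittingTime X ω ≤ t}.indicator
        (stoppedProcess (compensatedPotential g X α) (zeroHittingTime X) t) =
        {ω | zeroHittingTime X ω ≤ t}.indicator
          (α • stoppedClock (zeroHittingTime X) t) := by
      refine Set.indicator_congr fun ω hω ↦ ?_
      rw [stoppedProcess_compensatedPotential, Pi.add_apply, Pi.add_apply,
        stoppedProcess_potential_eq_zero_of_zeroHittingTime_le hg0 hω, zero_add]
      rfl
    rw [hstopped]
    exact (((StronglyAdapted.stoppedProcess_of_discrete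
      (fun _ ↦ stronglyMeasurable_const) hτ) t).const_smul α).indicator (hτ.measurableSet_le t)
  · have hsplit : μ[compensatedPotential g X α (t + 1) | ℱ t] =ᵐ[μ]
        μ[fun ω ↦ g (X (t + 1) ω) | ℱ t] + fun _ ↦ α * ((t + 1 : ℕ) : ℝ) := by
      have h := condExp_add (m := ℱ t) (hgint (t + 1)) (integrable_const (α * (t + 1 : ℕ)))
      rwa [condExp_const (ℱ.le t)] at h
    filter_upwards [hsplit, hdrift t, ae_xmin_le_of_lt_zeroHittingTime hrange t]
      with ω hω hdriftω hxω hlt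
    rw [hω, Pi.add_apply, compensatedPotential]
    have := hdriftω (hxω hlt)
    push_cast at this ⊢
    linarith

lemma condExp_stoppedClock_zeroHittingTime_le [IsFiniteMeasure μ] (hX : Adapted ℱ X)
    (hrange : ∀ t, ∀ᵐ ω ∂μ, X t ω = 0 ∨ (xmin ≤ X t ω ∧ X t ω ≤ xmax))
    (hg0 : g 0 = 0) (hgpos : ∀ x, xmin ≤ x → x ≤ xmax → 0 < g x)
    (hgint : ∀ t, Integrable (fun ω ↦ g (X t ω)) μ) (hα : 0 < α)
    (hdrift : ∀ t, ∀ᵐ ω ∂μ, xmin ≤ X t ω →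
      (μ[fun ω' ↦ g (X (t + 1) ω') | ℱ t]) ω ≤ g (X t ω) - α) (n : ℕ) :
    μ[stoppedClock (zeroHittingTime X) n | ℱ 0]
      ≤ᵐ[μ] fun ω ↦ g (X 0 ω) / α := by
  have hτ := hX.isStoppingTime_zeroHittingTime
  set S := stoppedClock (zeroHittingTime X)
  set Z := stoppedProcess (compensatedPotential g X α) (zeroHittingTime X)
  have hZint : ∀ n, Integrable (Z n) μ :=
    integrable_stoppedProcess hτ fun t ↦ (hgint t).add (integrable_const _)
  have hSint : ∀ n, Integrable (S n) μ := integrable_stoppedProcess hτ fun _ ↦ integrable_const _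
  have hgX := ae_nonneg_potential hrange hg0 hgpos
  cases n with
  | zero =>
    have hS0 : S 0 = 0 := by
      simp only [S, stoppedProcess_zero]
      exact funext fun _ ↦ Nat.cast_zero
    rw [hS0, condExp_zero]
    filter_upwards [hgX] with ω hω using div_nonneg (hω 0) hα.le
  | succ n =>
    have hsuper : μ[Z (n + 1) | ℱ 0] ≤ᵐ[μ] Z 0 := by
      simpa only [zero_add] using condExp_le_of_condExp_add_one_le hZint
        (condExp_stoppedProcess_compensatedPotential_add_one_le hX hrange hg0 hgint hdrift) 0 n
    have hlower : α • S (n + 1) ≤ᵐ[μ] Z (n + 1) := by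
      filter_upwards [hgX] with ω hω
      exact le_add_of_nonneg_left (hω _)
    filter_upwards [hsuper, condExp_mono (m := ℱ 0) ((hSint _).smul α) (hZint _) hlower,
      condExp_smul (m := ℱ 0) (μ := μ) α (S (n + 1))] with ω hsuperω hmonoω hsmulω
    have hZ0 : Z 0 ω = g (X 0 ω) := by
      simp [Z, stoppedProcess_zero, compensatedPotential]
    rw [le_div_iff₀ hα, mul_comm]
    calc α * μ[S (n + 1) | ℱ 0] ω = μ[α • S (n + 1) | ℱ 0] ω := hsmulω.symm
      _ ≤ Z 0 ω := hmonoω.trans hsuperω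
      _ = g (X 0 ω) := hZ0

end AdditiveDrift

theorem additive_drift_general
    {Ω : Type*} {m0 : MeasurableSpace Ω} (μ : Measure Ω) [IsProbabilityMeasure μ]
    (ℱ : Filtration ℕ m0) (X : ℕ → Ω → ℝ) (hX : Adapted ℱ X)
    (xmin xmax : ℝ)
    (hrange : ∀ t, ∀ᵐ ω ∂μ, X t ω = 0 ∨ (xmin ≤ X t ω ∧ X t ω ≤ xmax))
    (g : ℝ → ℝ) (hg0 : g 0 = 0)
    (hgpos : ∀ x, xmin ≤ x → x ≤ xmax → 0 < g x)
    (hgint : ∀ t, Integrable (fun ω => g (X t ω)) μ)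
    (α : ℝ) (hα : 0 < α)
    (hdrift : ∀ t, ∀ᵐ ω ∂μ, xmin ≤ X t ω →
      (μ[fun ω' => g (X (t + 1) ω') | ℱ t]) ω ≤ g (X t ω) - α)
    (T : Ω → ℕ) (hT : ∀ ω, T ω = sInf {t | X t ω = 0}) :
    (∀ᵐ ω ∂μ, ∃ t, X t ω = 0) ∧
    ∀ᵐ ω ∂μ, (μ[fun ω' => (T ω' : ℝ) | ℱ 0]) ω ≤ g (X 0 ω) / α := by
  set S := stoppedClock (zeroHittingTime X)
  have hS := condExp_stoppedClock_zeroHittingTime_le hX hrange hg0 hgpos hgint hα hdrift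
  have hSint : ∀ n, Integrable (S n) μ :=
    integrable_stoppedProcess hX.isStoppingTime_zeroHittingTime fun _ ↦ integrable_const _
  have hS_integral : ∀ n, ∫ ω, S n ω ∂μ ≤ ∫ ω, g (X 0 ω) / α ∂μ := fun n ↦ by
    rw [← integral_condExp (ℱ.le 0)]
    exact integral_mono_ae integrable_condExp ((hgint 0).div_const α) (hS n)
  have hhit : ∀ᵐ ω ∂μ, ∃ t, X t ω = 0 :=
    (ae_ne_top_of_integral_stoppedClock_le hSint hS_integral).mono fun ω h ↦ by
      simpa [zeroHittingTime_eq_top_iff] using h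
  refine ⟨hhit, ?_⟩
  have hST : ∀ᵐ ω ∂μ, ∀ n, S n ω = min (n : ℝ) (T ω) := hhit.mono fun ω h n ↦
    stoppedClock_apply_of_eq _ (by rw [hT, zeroHittingTime_eq_sInf h]) n
  have hmono : ∀ᵐ ω ∂μ, Monotone (S · ω) := hST.mono fun ω h m n hmn ↦ by
    simp only [h]
    exact min_le_min_right _ (by exact_mod_cast hmn)
  have hlim : ∀ᵐ ω ∂μ, Tendsto (S · ω) atTop (𝓝 (T ω)) := hST.mono fun ω h ↦ by
    refine tendsto_const_nhds.congr' ?_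
    filter_upwards [eventually_ge_atTop (T ω)] with n hn
    rw [h, min_eq_right (by exact_mod_cast hn)]
  have hTint : Integrable (fun ω ↦ (T ω : ℝ)) μ :=
    integrable_of_tendsto_of_integral_norm_le hSint (fun n ↦ (integral_congr_ae (ae_of_all _
      fun ω ↦ Real.norm_of_nonneg (stoppedClock_nonneg _ n ω))).trans_le (hS_integral n)) hlim
  exact condExp_ae_le_of_monotone_of_tendsto (ℱ.le 0) hSint hTint hmono hlim
    ((hgint 0).aemeasurable.div_const α) hS

/-- Additive drift theorem (Lehre–Witt): if the potential `g` of an adapted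
process `(X_t)` on `{0} ∪ [x_min, x_max]` decreases in conditional expectation
by at least `α > 0` whenever `X_t ≥ x_min`, then the process hits `0` almost
surely and the conditional expected hitting time given `ℱ 0` is at most
`g(X_0)/α`. -/
theorem additive_drift
    {Ω : Type*} {m0 : MeasurableSpace Ω} (μ : Measure Ω) [IsProbabilityMeasure μ]
    (ℱ : Filtration ℕ m0) (X : ℕ → Ω → ℝ) (hX : Adapted ℱ X)
    (xmin xmax : ℝ) (hxmin : 0 < xmin)
    (hrange : ∀ t, ∀ᵐ ω ∂μ, X t ω = 0 ∨ (xmin ≤ X t ω ∧ X t ω ≤ xmax))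
    (g : ℝ → ℝ) (hg0 : g 0 = 0)
    (hgpos : ∀ x, xmin ≤ x → x ≤ xmax → 0 < g x)
    (hgint : ∀ t, Integrable (fun ω => g (X t ω)) μ)
    (α : ℝ) (hα : 0 < α)
    (hdrift : ∀ t, ∀ᵐ ω ∂μ, xmin ≤ X t ω →
      (μ[fun ω' => g (X (t + 1) ω') | ℱ t]) ω ≤ g (X t ω) - α)
    (T : Ω → ℕ) (hT : ∀ ω, T ω = sInf {t | X t ω = 0}) :
    (∀ᵐ ω ∂μ, ∃ t, X t ω = 0) ∧
    ∀ᵐ ω ∂μ, (μ[fun ω' => (T ω' : ℝ) | ℱ 0]) ω ≤ g (X 0 ω) / α :=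
  additive_drift_general μ ℱ X hX xmin xmax hrange g hg0 hgpos hgint α hα hdrift T hT
end

section
/- Let $M$ be an absorbing Markov chain on transient states $0,\ldots,m-1$ and absorbing state $m$, with $I-Q$ strictly diagonally dominant, where $Q$ is the transient transition matrix. Then the expected absorption time from state $0$ satisfies $E[T_0] \leq n_{1,1} + \sum_{k=2}^m \frac{1}{p_{k-1,m}}$, where $n_{1,1}$ is the top-left entry of $(I-Q)^{-1}$ and $p_{k-1,m}$ is the one-step absorption probability from state $k-1$ (assumed positive for $k \geq 2$). -/
/-!
For `Q ≥ 0` with row sums `< 1`, the `ℓ^∞` operator norm of `Q` is `< 1`, so the Neumann series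
`∑ₜ Qᵗ` converges to the fundamental matrix `N = (1 - Q)⁻¹`; in particular
`E[T₀] = ∑ₜ ∑ₖ (Qᵗ)₀ₖ = ∑ₖ N₀ₖ`. Each column of `N` solves `N = 1 + Q N`, and a discrete maximum
principle for this equation gives `N_{ik} ≤ 1 / p_k` with `p_k = 1 - ∑ₗ Q_{kl}`.
-/

namespace Matrix

variable {ι : Type*} [Fintype ι] [DecidableEq ι]

section LinftyOpNorm

attribute [local instance] Matrix.linftyOpNormedRing Matrix.linftyOpNormedAlgebra

theorem linfty_opNorm_lt_one_of_abs_row_sum_lt_one {Q : Matrix ι ι ℝ}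
    (hQ : ∀ i, ∑ j, |Q i j| < 1) : ‖Q‖ < 1 := by
  rw [linfty_opNorm_def, ← NNReal.coe_one, NNReal.coe_lt_coe, Finset.sup_lt_iff zero_lt_one]
  intro i _
  rw [← NNReal.coe_lt_coe]
  simpa only [NNReal.coe_sum, coe_nnnorm, Real.norm_eq_abs, NNReal.coe_one] using hQ i

theorem hasSum_pow_of_abs_row_sum_lt_one {Q : Matrix ι ι ℝ}
    (hQ : ∀ i, ∑ j, |Q i j| < 1) : HasSum (Q ^ ·) (1 - Q)⁻¹ := by
  rw [nonsing_inv_eq_ringInverse]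
  exact hasSum_geom_series_inverse Q (linfty_opNorm_lt_one_of_abs_row_sum_lt_one hQ)

theorem isUnit_one_sub_of_abs_row_sum_lt_one {Q : Matrix ι ι ℝ}
    (hQ : ∀ i, ∑ j, |Q i j| < 1) : IsUnit (1 - Q) :=
  isUnit_one_sub_of_norm_lt_one (linfty_opNorm_lt_one_of_abs_row_sum_lt_one hQ)

end LinftyOpNorm

theorem inv_one_sub_eq_one_add_mul_inv {R : Type*} [CommRing R] {Q : Matrix ι ι R}
    (h : IsUnit (1 - Q)) : (1 - Q)⁻¹ = 1 + Q * (1 - Q)⁻¹ := by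
  have hinv : (1 - Q) * (1 - Q)⁻¹ = 1 := mul_nonsing_inv _ ((isUnit_iff_isUnit_det _).mp h)
  calc (1 - Q)⁻¹ = (1 - Q) * (1 - Q)⁻¹ + Q * (1 - Q)⁻¹ := by rw [sub_mul, one_mul, sub_add_cancel]
    _ = 1 + Q * (1 - Q)⁻¹ := by rw [hinv]

/- Column `k` of `N` attains its maximum at some row `i₀`; the equation in row `i₀` gives
`p_{i₀} · N i₀ k ≤ δ_{i₀ k}`, so the maximum is `≤ 1 / p_k` if `i₀ = k` and `≤ 0` otherwise. -/
theorem apply_le_one_div_of_eq_one_add_mul {Q N : Matrix ι ι ℝ} (hQ : ∀ i j, 0 ≤ Q i j)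
    (hrow : ∀ i, ∑ j, Q i j < 1) (hN : N = 1 + Q * N) (i k : ι) :
    N i k ≤ 1 / (1 - ∑ j, Q k j) := by
  have : Nonempty ι := ⟨i⟩
  obtain ⟨i₀, hi₀⟩ := Finite.exists_max (N · k)
  have hgap : (1 - ∑ j, Q i₀ j) * N i₀ k ≤ (1 : Matrix ι ι ℝ) i₀ k := by
    have hrow_i₀ : N i₀ k = (1 : Matrix ι ι ℝ) i₀ k + ∑ j, Q i₀ j * N j k :=
      congrFun₂ hN i₀ k
    have : ∑ j, Q i₀ j * N j k ≤ (∑ j, Q i₀ j) * N i₀ k := by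
      rw [Finset.sum_mul]
      exact Finset.sum_le_sum fun j _ => mul_le_mul_of_nonneg_left (hi₀ j) (hQ i₀ j)
    linarith
  have hp : 0 < 1 - ∑ j, Q k j := sub_pos.mpr (hrow k)
  refine (hi₀ i).trans ?_
  by_cases hk : i₀ = k
  · subst hk
    rw [one_apply_eq] at hgap
    rw [le_div_iff₀ hp]
    linarith
  · rw [one_apply_ne hk] at hgap
    have hmax_nonpos : N i₀ k ≤ 0 := nonpos_of_mul_nonpos_right hgap (sub_pos.mpr (hrow i₀))
    exact hmax_nonpos.trans (by positivity)

end Matrix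

/-- For an absorbing Markov chain with transient transition matrix `Q` such
that `I - Q` is strictly diagonally dominant (every row sum of the
non-negative matrix `Q` is `< 1`), the expected absorption time from state `0`
(namely `∑' t, ∑ k, (Q^t) 0 k`) is at most `n₁₁ + ∑_{k ≠ 0} 1/p_{k,m}`, where
`n₁₁` is the top-left entry of the fundamental matrix `(I - Q)⁻¹` and
`p_{k,m} = 1 - ∑ l, Q k l` is the one-step absorption probability from `k`. -/
theorem absorption_time_upper_bound
    (m : ℕ) (hm : 0 < m) (Q : Matrix (Fin m) (Fin m) ℝ)
    (hnonneg : ∀ i k, 0 ≤ Q i k)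
    (hrow : ∀ i, ∑ k, Q i k < 1)
    (pabs : Fin m → ℝ) (hpabs : ∀ i, pabs i = 1 - ∑ k, Q i k) :
    (∑' t : ℕ, ∑ k, (Q ^ t) (⟨0, hm⟩ : Fin m) k) ≤
      (1 - Q)⁻¹ ⟨0, hm⟩ ⟨0, hm⟩ +
        ∑ k ∈ Finset.univ.erase (⟨0, hm⟩ : Fin m), 1 / pabs k := by
  set i₀ : Fin m := ⟨0, hm⟩
  have habs : ∀ i, ∑ k, |Q i k| < 1 := fun i => by
    simpa only [abs_of_nonneg (hnonneg i _)] using hrow i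
  have hN : HasSum (Q ^ ·) (1 - Q)⁻¹ := Matrix.hasSum_pow_of_abs_row_sum_lt_one habs
  have hsum : HasSum (fun t : ℕ => ∑ k, (Q ^ t) i₀ k) (∑ k, (1 - Q)⁻¹ i₀ k) :=
    hasSum_sum fun k _ => Pi.hasSum.mp (Pi.hasSum.mp hN i₀) k
  have hfix := Matrix.inv_one_sub_eq_one_add_mul_inv
    (Matrix.isUnit_one_sub_of_abs_row_sum_lt_one habs)
  rw [hsum.tsum_eq, ← Finset.add_sum_erase _ _ (Finset.mem_univ i₀)]
  gcongr with k
  rw [hpabs]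
  exact Matrix.apply_le_one_div_of_eq_one_add_mul hnonneg hrow hfix i₀ k
end
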